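/- arXiv:2603.17724 — 9 statements merged into one kernel-verified Lean document; each statement's English description precedes it below -/
import Mathlib

section
/- Let (A, f) be a Boolean frame satisfying the condition (*): for all x, y, z ∈ A, if x ⊕ y ≤ z then f(x) ⊕ f(y) ≤ f(z). Then (A, f) has the congruence extension property. -/
universe u v

/-- A congruence of the Boolean frame `(α, f)`: an equivalence relation compatible
with the Boolean operations and with `f`. -/
structure IsCongr {α : Type u} [BooleanAlgebra α] (f : α → α) (Θ : α → α → Prop) : Prop where
  refl : ∀ x, Θ x x
  symm : ∀ {x y}, Θ x y → Θ y x
  trans : ∀ {x y z}, Θ x y → Θ y z → Θ x z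
  inf : ∀ {x y x' y'}, Θ x y → Θ x' y' → Θ (x ⊓ x') (y ⊓ y')
  compl : ∀ {x y}, Θ x y → Θ xᶜ yᶜ
  map : ∀ {x y}, Θ x y → Θ (f x) (f y)

/-- `B` is (the universe of) a subalgebra of the Boolean frame `(α, f)`:
it contains `⊥` and is closed under `⊓`, complement and `f`. -/
def IsSubalg {α : Type u} [BooleanAlgebra α] (f : α → α) (B : Set α) : Prop :=
  ⊥ ∈ B ∧ (∀ x ∈ B, ∀ y ∈ B, x ⊓ y ∈ B) ∧ (∀ x ∈ B, xᶜ ∈ B) ∧ (∀ x ∈ B, f x ∈ B)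

/-- A congruence of the Boolean frame whose universe is the subset `B` of `α`
(with the operations restricted from `(α, f)`), encoded as a relation on `α`
whose domain is contained in `B`. -/
structure IsCongrOn {α : Type u} [BooleanAlgebra α] (f : α → α) (B : Set α)
    (Θ : α → α → Prop) : Prop where
  dom : ∀ {x y}, Θ x y → x ∈ B ∧ y ∈ B
  refl : ∀ x ∈ B, Θ x x
  symm : ∀ {x y}, Θ x y → Θ y x
  trans : ∀ {x y z}, Θ x y → Θ y z → Θ x z
  inf : ∀ {x y x' y'}, Θ x y → Θ x' y' → Θ (x ⊓ x') (y ⊓ y')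
  compl : ∀ {x y}, Θ x y → Θ xᶜ yᶜ
  map : ∀ {x y}, Θ x y → Θ (f x) (f y)

/-- The Boolean frame `(α, f)` has the congruence extension property: every congruence
of every subalgebra is the restriction of a congruence of the whole frame. -/
def HasCEP {α : Type u} [BooleanAlgebra α] (f : α → α) : Prop :=
  ∀ B : Set α, IsSubalg f B → ∀ Θ : α → α → Prop, IsCongrOn f B Θ →
    ∃ Ψ : α → α → Prop, IsCongr f Ψ ∧ ∀ x y, Θ x y ↔ (Ψ x y ∧ x ∈ B ∧ y ∈ B)

open symmDiff

/-- a Boolean frame satisfying (*) has the congruence extension property. -/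
theorem stmt_0 {α : Type u} [BooleanAlgebra α] (f : α → α)
    (hstar : ∀ x y z : α, (x ⊓ yᶜ) ⊔ (xᶜ ⊓ y) ≤ z →
      (f x ⊓ (f y)ᶜ) ⊔ ((f x)ᶜ ⊓ f y) ≤ f z) :
    HasCEP f := by
  intro B hB Θ hΘ
  obtain ⟨hbot, hinfB, hcomplB, hfB⟩ := hB
  -- rephrase (*) using symmDiff
  have hstar' : ∀ x y z : α, x ∆ y ≤ z → f x ∆ f y ≤ f z := by
    intro x y z h
    have h' : (x ⊓ yᶜ) ⊔ (xᶜ ⊓ y) ≤ z := by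
      rwa [symmDiff_eq, inf_comm y xᶜ] at h
    have := hstar x y z h'
    rwa [symmDiff_eq, inf_comm (f y) (f x)ᶜ]
    -- goal now matches
  -- f is monotone
  have hmono : ∀ x y : α, x ≤ y → f x ≤ f y := by
    intro x y hxy
    have h1 : f x ∆ f y ≤ f y := hstar' x y y (by rw [symmDiff_of_le hxy]; exact sdiff_le)
    have h2 : f x \ f y ≤ f y := le_trans (le_sup_left) (by rwa [symmDiff] at h1)
    have h3 : f x \ f y ≤ (f y)ᶜ := by rw [sdiff_eq]; exact inf_le_right
    have : f x \ f y ≤ ⊥ := by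
      calc f x \ f y ≤ f y ⊓ (f y)ᶜ := le_inf h2 h3
      _ = ⊥ := by simp
    exact sdiff_eq_bot_iff.mp (le_bot_iff.mp this)
  -- B is closed under sup and symmDiff
  have hsupB : ∀ x ∈ B, ∀ y ∈ B, x ⊔ y ∈ B := by
    intro x hx y hy
    have : (xᶜ ⊓ yᶜ)ᶜ ∈ B := hcomplB _ (hinfB _ (hcomplB _ hx) _ (hcomplB _ hy))
    simpa using this
  have hsdB : ∀ x ∈ B, ∀ y ∈ B, x ∆ y ∈ B := by
    intro x hx y hy
    rw [symmDiff_eq]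
    exact hsupB _ (hinfB _ hx _ (hcomplB _ hy)) _ (hinfB _ hy _ (hcomplB _ hx))
  -- Θ is compatible with sup and symmDiff
  have hΘsup : ∀ {u u' v v'}, Θ u u' → Θ v v' → Θ (u ⊔ v) (u' ⊔ v') := by
    intro u u' v v' h1 h2
    have := hΘ.compl (hΘ.inf (hΘ.compl h1) (hΘ.compl h2))
    simpa [compl_inf] using this
  have hΘsd : ∀ {u u' v v'}, Θ u u' → Θ v v' → Θ (u ∆ v) (u' ∆ v') := by
    intro u u' v v' h1 h2
    rw [symmDiff_eq, symmDiff_eq]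
    exact hΘsup (hΘ.inf h1 (hΘ.compl h2)) (hΘ.inf h2 (hΘ.compl h1))
  -- from Θ (x ∆ y) ⊥ and x ∈ B we get Θ x y
  have hrec : ∀ {x y : α}, x ∈ B → x ∆ y ∈ B → Θ (x ∆ y) ⊥ → Θ x y := by
    intro x y hx hd hΘd
    have h1 : Θ (x ∆ (x ∆ y)) (x ∆ ⊥) := hΘsd (hΘ.refl x hx) hΘd
    rw [symmDiff_symmDiff_cancel_left, symmDiff_bot] at h1
    exact hΘ.symm h1
  -- the extension
  refine ⟨fun x y => ∃ b, b ∈ B ∧ Θ b ⊥ ∧ x ∆ y ≤ b, ⟨?_, ?_, ?_, ?_, ?_, ?_⟩, ?_⟩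
  · -- refl
    intro x
    exact ⟨⊥, hbot, hΘ.refl ⊥ hbot, by simp⟩
  · -- symm
    rintro x y ⟨b, hb, hΘb, hle⟩
    exact ⟨b, hb, hΘb, by rwa [symmDiff_comm]⟩
  · -- trans
    rintro x y z ⟨b, hb, hΘb, hle⟩ ⟨b', hb', hΘb', hle'⟩
    refine ⟨b ⊔ b', hsupB _ hb _ hb', ?_, ?_⟩
    · simpa using hΘsup hΘb hΘb'
    · exact le_trans (symmDiff_triangle x y z) (sup_le_sup hle hle')
  · -- inf
    rintro x y x' y' ⟨b, hb, hΘb, hle⟩ ⟨b', hb', hΘb', hle'⟩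
    refine ⟨b ⊔ b', hsupB _ hb _ hb', by simpa using hΘsup hΘb hΘb', ?_⟩
    have hle1 : ∀ a c : α, a ≤ c ⊔ a ∆ c := by
      intro a c
      calc a ≤ a \ c ⊔ c := le_sdiff_sup
        _ ≤ a ∆ c ⊔ c := sup_le_sup_right (by rw [symmDiff]; exact le_sup_left) c
        _ = c ⊔ a ∆ c := sup_comm _ _
    have hdistr : ∀ p q s t : α, (p ⊔ s) ⊓ (q ⊔ t) ≤ (p ⊓ q) ⊔ (s ⊔ t) := by
      intro p q s t
      rw [inf_sup_right]
      refine sup_le ?_ (le_sup_of_le_right (le_sup_of_le_left inf_le_left))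
      rw [inf_sup_left]
      exact sup_le le_sup_left (le_sup_of_le_right (le_sup_of_le_right inf_le_right))
    have key : (x ⊓ x') ∆ (y ⊓ y') ≤ x ∆ y ⊔ x' ∆ y' := by
      rw [symmDiff_le_iff]
      constructor
      · calc x ⊓ x' ≤ (y ⊔ x ∆ y) ⊓ (y' ⊔ x' ∆ y') := inf_le_inf (hle1 x y) (hle1 x' y')
          _ ≤ (y ⊓ y') ⊔ (x ∆ y ⊔ x' ∆ y') := hdistr _ _ _ _
      · calc y ⊓ y' ≤ (x ⊔ x ∆ y) ⊓ (x' ⊔ x' ∆ y') := by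
              have h1 := hle1 y x
              have h2 := hle1 y' x'
              rw [symmDiff_comm] at h1 h2
              exact inf_le_inf h1 h2
          _ ≤ (x ⊓ x') ⊔ (x ∆ y ⊔ x' ∆ y') := hdistr _ _ _ _
    exact key.trans (sup_le_sup hle hle')
  · -- compl
    rintro x y ⟨b, hb, hΘb, hle⟩
    exact ⟨b, hb, hΘb, by rwa [compl_symmDiff_compl]⟩
  · -- map
    rintro x y ⟨b, hb, hΘb, hle⟩
    refine ⟨f b ∆ f ⊥, hsdB _ (hfB _ hb) _ (hfB _ hbot), ?_, ?_⟩
    · have := hΘsd (hΘ.map hΘb) (hΘ.refl (f ⊥) (hfB _ hbot))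
      simpa using this
    · have h1 : f x ∆ f y ≤ f b := hstar' x y b hle
      have hfx : f ⊥ ≤ f x := hmono _ _ bot_le
      have hfy : f ⊥ ≤ f y := hmono _ _ bot_le
      have hdisj : Disjoint (f x ∆ f y) (f ⊥) :=
        (disjoint_symmDiff_inf (f x) (f y)).mono_right (le_inf hfx hfy)
      rw [symmDiff_of_ge (hmono _ _ bot_le), sdiff_eq]
      exact le_inf h1 hdisj.le_compl_right
  · -- restriction
    intro x y
    constructor
    · intro hxy
      obtain ⟨hx, hy⟩ := hΘ.dom hxy
      refine ⟨⟨x ∆ y, hsdB _ hx _ hy, ?_, le_rfl⟩, hx, hy⟩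
      have := hΘsd hxy (hΘ.refl y hy)
      simpa using this
    · rintro ⟨⟨b, hb, hΘb, hle⟩, hx, hy⟩
      have hd : x ∆ y ∈ B := hsdB _ hx _ hy
      have h1 : Θ (x ∆ y ⊓ b) (x ∆ y ⊓ ⊥) := hΘ.inf (hΘ.refl _ hd) hΘb
      rw [inf_eq_left.mpr hle, inf_bot_eq] at h1
      exact hrec hx hd h1
end

section
/- Let A be the powerset Boolean algebra of {1, 2, 3} and define f : A → A by f({1,3}) = {1,2,3} and f(X) = X for every X ≠ {1,3}. Then the Boolean frame (A, f) is not term-equivalent to (A, g) for any additive g : A → A; that is, there is no additive function g : A → A such that g ∈ Clo₁(A, f) and f ∈ Clo₁(A, g). -/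
universe u v

/-- The unary term clone of the Boolean frame `(α, g)`: the smallest set of unary
functions containing the identity and the constant `⊥`, closed under pointwise meet,
pointwise complement, and postcomposition with `g`. -/
inductive Clo1 {α : Type u} [BooleanAlgebra α] (g : α → α) : (α → α) → Prop
  | id : Clo1 g (fun x => x)
  | zero : Clo1 g (fun _ => ⊥)
  | inf {h k : α → α} : Clo1 g h → Clo1 g k → Clo1 g (fun x => h x ⊓ k x)
  | compl {h : α → α} : Clo1 g h → Clo1 g (fun x => (h x)ᶜ)
  | comp {h : α → α} : Clo1 g h → Clo1 g (fun x => g (h x))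

open Classical in
/-- The operation of Example 2.2 on the powerset of a three-element set
(the elements `1, 2, 3` are modelled as `0, 1, 2 : Fin 3`, so `{1,3}` is `{0,2}`):
`f({1,3}) = {1,2,3}` and `f(X) = X` otherwise. -/
noncomputable def f2 : Set (Fin 3) → Set (Fin 3) := fun X =>
  if X = ({0, 2} : Set (Fin 3)) then Set.univ else X

-- Lemma B
lemma clo1_preserves {α : Type u} [BooleanAlgebra α] (g : α → α)
    (hadd : ∀ x y, g (x ⊔ y) = g x ⊔ g y) (a : α) (hga : g a ≤ a ⊔ g ⊥)
    {h : α → α} (hh : Clo1 g h) :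
    ∀ x y, x ⊔ a = y ⊔ a → h x ⊔ a = h y ⊔ a := by
  have hb : ∀ u, g ⊥ ≤ g u := by
    intro u
    have := hadd u ⊥
    rw [sup_bot_eq] at this
    rw [this]; exact le_sup_right
  have e : ∀ u, (g u ⊔ g a) ⊔ a = g u ⊔ a := by
    intro u
    rw [sup_right_comm]
    exact sup_eq_left.mpr (hga.trans (sup_le le_sup_right ((hb u).trans le_sup_left)))
  induction hh with
  | id => intro x y hxy; exact hxy
  | zero => intro x y _; rfl
  | inf h1 h2 ih1 ih2 =>
    intro x y hxy
    simp only [sup_inf_right]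
    rw [ih1 x y hxy, ih2 x y hxy]
  | compl h1 ih =>
    intro x y hxy
    have key : ∀ u : α, uᶜ ⊔ a = ((u ⊔ a) ⊓ aᶜ)ᶜ := by
      intro u
      rw [compl_inf, compl_compl, compl_sup, sup_inf_right, compl_sup_eq_top, inf_top_eq]
    rw [key, key, ih x y hxy]
  | comp h1 ih =>
    intro x y hxy
    rw [← e, ← e, ← hadd, ← hadd, ih x y hxy]

-- Lemma A
lemma clo1_f2_inv {h : Set (Fin 3) → Set (Fin 3)} (hh : Clo1 f2 h) :
    ((1:Fin 3) ∈ h {0} ↔ (2:Fin 3) ∈ h {0}) ∧ ((1:Fin 3) ∈ h {0} ↔ (1:Fin 3) ∈ h ⊥)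
      ∧ ((2:Fin 3) ∈ h {0} ↔ (2:Fin 3) ∈ h ⊥) := by
  have key : ∀ w : Set (Fin 3), ((1:Fin 3) ∈ w ↔ (2:Fin 3) ∈ w) → f2 w = w := by
    intro w hw
    unfold f2
    rw [if_neg]
    intro he
    subst he
    simp [Set.mem_insert_iff, Set.mem_singleton_iff] at hw
  induction hh with
  | id => simp
  | zero => simp
  | inf h1 h2 ih1 ih2 =>
    obtain ⟨a1, a2, a3⟩ := ih1
    obtain ⟨b1, b2, b3⟩ := ih2
    simp only [Set.mem_inter_iff, Set.inf_eq_inter] at *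
    tauto
  | compl h1 ih =>
    obtain ⟨a1, a2, a3⟩ := ih
    simp only [Set.mem_compl_iff] at *
    tauto
  | comp h1 ih =>
    obtain ⟨a1, a2, a3⟩ := ih
    have e1 := key _ a1
    have e2 := key _ (by rw [← a2, ← a3]; exact a1)
    simp only [e1, e2]
    exact ⟨a1, a2, a3⟩


/-- `(𝒫{1,2,3}, f2)` is not term-equivalent to `(𝒫{1,2,3}, g)`
for any additive `g`. -/
theorem stmt_2 :
    ¬ ∃ g : Set (Fin 3) → Set (Fin 3),
      (∀ x y : Set (Fin 3), g (x ⊔ y) = g x ⊔ g y) ∧ Clo1 f2 g ∧ Clo1 g f2 := by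
  rintro ⟨g, hadd, hgclo, hfclo⟩
  obtain ⟨a1, a2, a3⟩ := clo1_f2_inv hgclo
  have hga : g {0} ≤ ({0} : Set (Fin 3)) ⊔ g ⊥ := by
    intro i hi
    have hrw : ({0} : Set (Fin 3)) ⊔ g ⊥ = {0} ∪ g ⊥ := rfl
    rw [hrw, Set.mem_union]
    fin_cases i
    · left; exact rfl
    · right; exact a2.mp hi
    · right; exact a3.mp hi
  have hB := clo1_preserves g hadd ({0} : Set (Fin 3)) hga hfclo
  have hxy : ({0, 2} : Set (Fin 3)) ⊔ {0} = ({2} : Set (Fin 3)) ⊔ {0} := by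
    ext i; fin_cases i <;> simp
  have hC := hB _ _ hxy
  have e1 : f2 ({0, 2} : Set (Fin 3)) = Set.univ := by unfold f2; rw [if_pos rfl]
  have e2 : f2 ({2} : Set (Fin 3)) = ({2} : Set (Fin 3)) := by
    unfold f2
    rw [if_neg]
    intro he
    have h0 : (0 : Fin 3) ∈ ({2} : Set (Fin 3)) := by
      rw [he]; exact Set.mem_insert _ _
    simp at h0
  rw [e1, e2] at hC
  have h1 : (1 : Fin 3) ∈ ({2} : Set (Fin 3)) ⊔ {0} := by
    rw [← hC]; simp
  simp [Set.sup_eq_union] at h1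
end

section
/- For every S ⊆ ℕ \ {0}, the Boolean frame 𝔄_S = (B, f_S) is simple: its only congruences are the equality relation and the full relation B × B. (In particular, the term d(x) = x ⊔ f_S(x) satisfies d(∅) = ∅ and d(x) = ℕ for every x ≠ ∅.) -/
universe u v

/-- The Boolean algebra of finite and cofinite subsets of `ℕ`. -/
def BFC : Set (Set ℕ) := {X : Set ℕ | X.Finite ∨ Xᶜ.Finite}

open Classical in
/-- The operation `f_S` (defined on all of the powerset of `ℕ`; the Boolean frame `𝔄_S`
is its restriction to the finite-cofinite algebra `BFC`, which is closed under `f_S`):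
`f_S(ℕ) = b₀`, `f_S(bₙ) = bₙ₊₁`, `f_S(aₙ) = bₙ`, `f_S(uₙ) = ℕ \ uₙ` if `n ≥ 1` and `n ∈ S`,
`f_S(uₙ) = ℕ` if `n ≥ 1` and `n ∉ S`, `f_S(∅) = ∅`, and `f_S(x) = ℕ` otherwise,
where `aₙ = {n}`, `bₙ = ℕ \ {n}`, `uₙ = {0, …, n}`. -/
noncomputable def fS (S : Set ℕ) (X : Set ℕ) : Set ℕ :=
  if X = Set.univ then ({0} : Set ℕ)ᶜ
  else if h : ∃ n : ℕ, X = ({n} : Set ℕ)ᶜ then ({h.choose + 1} : Set ℕ)ᶜ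
  else if h : ∃ n : ℕ, X = ({n} : Set ℕ) then ({h.choose} : Set ℕ)ᶜ
  else if h : ∃ n : ℕ, 1 ≤ n ∧ X = {k : ℕ | k ≤ n} then
    (if h.choose ∈ S then ({k : ℕ | k ≤ h.choose} : Set ℕ)ᶜ else Set.univ)
  else if X = ∅ then ∅
  else Set.univ

lemma fS_empty (S : Set ℕ) : fS S ∅ = ∅ := by
  unfold fS
  rw [if_neg (Ne.symm (Set.empty_ne_univ)).symm]
  rw [dif_neg, dif_neg, dif_neg, if_pos rfl]
  · rintro ⟨n, h1, hn⟩
    have : (0 : ℕ) ∈ ({k : ℕ | k ≤ n} : Set ℕ) := by simp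
    rw [← hn] at this; exact this
  · rintro ⟨n, hn⟩
    exact (Set.singleton_ne_empty n) hn.symm
  · rintro ⟨n, hn⟩
    have : (n + 1) ∈ (({n} : Set ℕ)ᶜ) := by simp
    rw [← hn] at this; exact this

lemma d_univ (S : Set ℕ) (x : Set ℕ) (hx : x ≠ ∅) : x ⊔ fS S x = Set.univ := by
  unfold fS
  split_ifs with h1 h2 h3 h4 h5
  · simp [h1]
  · have hc := h2.choose_spec
    ext k
    simp only [Set.sup_eq_union, Set.mem_union, Set.mem_compl_iff, Set.mem_singleton_iff,
      Set.mem_univ, iff_true]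
    by_cases hk : k = h2.choose + 1
    · left; rw [hc]; simp; omega
    · right; exact hk
  · have hc := h3.choose_spec
    ext k
    simp only [Set.sup_eq_union, Set.mem_union, Set.mem_compl_iff, Set.mem_singleton_iff,
      Set.mem_univ, iff_true]
    by_cases hk : k = h3.choose
    · left; rw [hc]; exact hk
    · right; exact hk
  · have hc := h4.choose_spec.2
    ext k
    simp only [Set.sup_eq_union, Set.mem_union, Set.mem_compl_iff, Set.mem_setOf_eq,
      Set.mem_univ, iff_true]
    by_cases hk : k ≤ h4.choose
    · left; rw [hc]; exact hk
    · right; exact hk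
  all_goals first | (exact absurd (by assumption) hx) | simp

theorem stmt3_main (S : Set ℕ) (hS : 0 ∉ S) :
    (∀ Θ : Set ℕ → Set ℕ → Prop, IsCongrOn (fS S) BFC Θ →
      (∀ x y, Θ x y ↔ (x = y ∧ x ∈ BFC)) ∨ (∀ x y, Θ x y ↔ (x ∈ BFC ∧ y ∈ BFC))) ∧
    ((∅ : Set ℕ) ⊔ fS S ∅ = (∅ : Set ℕ)) ∧
    (∀ x ∈ BFC, x ≠ (∅ : Set ℕ) → x ⊔ fS S x = Set.univ) := by
  refine ⟨?_, by simp [fS_empty], fun x _ hx => d_univ S x hx⟩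
  intro Θ hΘ
  by_cases h : ∀ x y, Θ x y → x = y
  · left
    intro x y
    constructor
    · intro hxy
      exact ⟨h x y hxy, (hΘ.dom hxy).1⟩
    · rintro ⟨rfl, hx⟩
      exact hΘ.refl x hx
  · right
    push_neg at h
    obtain ⟨x, y, hxy, hne⟩ := h
    -- From Θ x y with x ≠ y, get some z ≠ ∅ with Θ z ∅
    have key : ∃ z : Set ℕ, z ≠ ∅ ∧ Θ z ⊥ := by
      have h1 : Θ (x ⊓ yᶜ) (y ⊓ yᶜ) := hΘ.inf hxy (hΘ.compl (hΘ.refl y (hΘ.dom hxy).2))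
      have h2 : Θ (y ⊓ xᶜ) (x ⊓ xᶜ) := hΘ.inf (hΘ.symm hxy) (hΘ.compl (hΘ.refl x (hΘ.dom hxy).1))
      rw [inf_compl_eq_bot] at h1 h2
      by_cases hz : x ⊓ yᶜ = ∅
      · refine ⟨y ⊓ xᶜ, ?_, h2⟩
        intro hz2
        apply hne
        have hxy' : x ≤ y := by
          intro k hk
          by_contra hky
          have hm : k ∈ x ⊓ yᶜ := ⟨hk, hky⟩
          rw [hz] at hm
          exact hm
        have hyx' : y ≤ x := by
          intro k hk
          by_contra hky
          have hm : k ∈ y ⊓ xᶜ := ⟨hk, hky⟩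
          rw [hz2] at hm
          exact hm
        exact le_antisymm hxy' hyx'
      · exact ⟨x ⊓ yᶜ, hz, h1⟩
    obtain ⟨z, hz, hzΘ⟩ := key
    -- Θ (z ⊔ fS S z) (⊥ ⊔ fS S ⊥)
    have hsup : Θ Set.univ (⊥ : Set ℕ) := by
      have h1 := hΘ.compl (hΘ.inf (hΘ.compl hzΘ) (hΘ.compl (hΘ.map hzΘ)))
      have e1 : (zᶜ ⊓ (fS S z)ᶜ)ᶜ = Set.univ := by
        rw [compl_inf, compl_compl, compl_compl]
        exact d_univ S z hz
      have e2 : ((⊥ : Set ℕ)ᶜ ⊓ (fS S ⊥)ᶜ)ᶜ = (⊥ : Set ℕ) := by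
        simp [Set.bot_eq_empty, fS_empty]
      rwa [e1, e2] at h1
    -- Θ univ ∅ ; so Θ is full on BFC
    intro a b
    constructor
    · intro hab
      exact hΘ.dom hab
    · rintro ⟨ha, hb⟩
      have hauniv : Θ Set.univ Set.univ := by
        have := hΘ.dom hsup
        exact hΘ.refl _ this.1
      have hstep : ∀ c ∈ BFC, Θ c (⊥ : Set ℕ) := by
        intro c hc
        have := hΘ.inf (hΘ.refl c hc) hsup
        simpa [Set.bot_eq_empty] using this
      exact hΘ.trans (hstep a ha) (hΘ.symm (hstep b hb))

/-- for every `S ⊆ ℕ \ {0}`, the Boolean frame `𝔄_S = (BFC, f_S)` is simple: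
every congruence of it is the equality relation or the full relation. (In particular,
`d(x) = x ⊔ f_S(x)` satisfies `d(∅) = ∅` and `d(x) = ℕ` for every `x ≠ ∅` in the frame.) -/
theorem stmt_3 (S : Set ℕ) (hS : 0 ∉ S) :
    (∀ Θ : Set ℕ → Set ℕ → Prop, IsCongrOn (fS S) BFC Θ →
      (∀ x y, Θ x y ↔ (x = y ∧ x ∈ BFC)) ∨ (∀ x y, Θ x y ↔ (x ∈ BFC ∧ y ∈ BFC))) ∧
    ((∅ : Set ℕ) ⊔ fS S ∅ = (∅ : Set ℕ)) ∧
    (∀ x ∈ BFC, x ≠ (∅ : Set ℕ) → x ⊔ fS S x = Set.univ) :=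
  stmt3_main S hS
end

section
/- For every S ⊆ ℕ \ {0}, the Boolean frame 𝔄_S = (B, f_S) has no proper subalgebras: the only subset of B containing ∅ and closed under intersection, Boolean complement, and f_S is B itself. (In particular, b_n = f_S^{(n+1)}(ℕ) and a_n = ℕ \ b_n for every n ∈ ℕ.) -/
universe u v

lemma fS_univ (S : Set ℕ) : fS S Set.univ = {0}ᶜ := by
  simp [fS]

lemma fS_compl_singleton (S : Set ℕ) (n : ℕ) : fS S {n}ᶜ = {n + 1}ᶜ := by
  have hex : ∃ m : ℕ, ({n} : Set ℕ)ᶜ = {m}ᶜ := ⟨n, rfl⟩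
  have hchoose : hex.choose = n :=
    (Set.singleton_eq_singleton_iff.mp (compl_inj_iff.mp hex.choose_spec)).symm
  rw [fS, if_neg (by simp), dif_pos hex, hchoose]

lemma iterate_fS_univ (S : Set ℕ) (n : ℕ) : (fS S)^[n + 1] Set.univ = {n}ᶜ := by
  induction n with
  | zero => exact fS_univ S
  | succ n ih => rw [Function.iterate_succ_apply', ih, fS_compl_singleton]

section BooleanClosure

variable {α : Type*} {C : Set (Set α)}

lemma union_mem_of_inter_compl_closed (hinf : ∀ x ∈ C, ∀ y ∈ C, x ⊓ y ∈ C)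
    (hcompl : ∀ x ∈ C, xᶜ ∈ C) {x y : Set α} (hx : x ∈ C) (hy : y ∈ C) : x ∪ y ∈ C := by
  simpa [Set.compl_inter] using hcompl _ (hinf _ (hcompl _ hx) _ (hcompl _ hy))

lemma finite_mem_of_singleton_mem (h0 : ∅ ∈ C) (hinf : ∀ x ∈ C, ∀ y ∈ C, x ⊓ y ∈ C)
    (hcompl : ∀ x ∈ C, xᶜ ∈ C) (hsingleton : ∀ a : α, {a} ∈ C) {x : Set α} (hx : x.Finite) :
    x ∈ C := by
  induction x, hx using Set.Finite.induction_on with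
  | empty => exact h0
  | @insert a s _ _ hs =>
    rw [Set.insert_eq]
    exact union_mem_of_inter_compl_closed hinf hcompl (hsingleton a) hs

lemma cofinite_mem_of_singleton_mem (h0 : ∅ ∈ C) (hinf : ∀ x ∈ C, ∀ y ∈ C, x ⊓ y ∈ C)
    (hcompl : ∀ x ∈ C, xᶜ ∈ C) (hsingleton : ∀ a : α, {a} ∈ C) {x : Set α}
    (hx : xᶜ.Finite) : x ∈ C := by
  simpa using hcompl _ (finite_mem_of_singleton_mem h0 hinf hcompl hsingleton hx)

end BooleanClosure

theorem stmt_4_general (S : Set ℕ) :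
    (∀ C : Set (Set ℕ), C ⊆ BFC → (∅ : Set ℕ) ∈ C →
      (∀ x ∈ C, ∀ y ∈ C, x ⊓ y ∈ C) → (∀ x ∈ C, xᶜ ∈ C) → (∀ x ∈ C, fS S x ∈ C) →
      C = BFC) ∧
    (∀ n : ℕ, (fS S)^[n + 1] Set.univ = ({n} : Set ℕ)ᶜ) ∧
    (∀ n : ℕ, ({n} : Set ℕ) = Set.univ \ ({n} : Set ℕ)ᶜ) := by
  refine ⟨?_, iterate_fS_univ S, fun n => by simp⟩
  intro C hsub h0 hinf hcompl hf
  have huniv : Set.univ ∈ C := by simpa using hcompl _ h0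
  have hsingleton : ∀ n : ℕ, ({n} : Set ℕ) ∈ C := fun n => by
    simpa [iterate_fS_univ] using hcompl _ (Set.MapsTo.iterate hf (n + 1) huniv)
  refine hsub.antisymm fun x hx => hx.elim ?_ ?_
  · exact finite_mem_of_singleton_mem h0 hinf hcompl hsingleton
  · exact cofinite_mem_of_singleton_mem h0 hinf hcompl hsingleton

/-- for every `S ⊆ ℕ \ {0}`, the Boolean frame `𝔄_S = (BFC, f_S)` has no
proper subalgebras: the only subset of `BFC` containing `∅` and closed under
intersection, complement and `f_S` is `BFC` itself. (In particular,
`bₙ = f_S^{(n+1)}(ℕ)` and `aₙ = ℕ \ bₙ` for every `n`.) -/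
theorem stmt_4 (S : Set ℕ) (hS : 0 ∉ S) :
    (∀ C : Set (Set ℕ), C ⊆ BFC → (∅ : Set ℕ) ∈ C →
      (∀ x ∈ C, ∀ y ∈ C, x ⊓ y ∈ C) → (∀ x ∈ C, xᶜ ∈ C) → (∀ x ∈ C, fS S x ∈ C) →
      C = BFC) ∧
    (∀ n : ℕ, (fS S)^[n + 1] Set.univ = ({n} : Set ℕ)ᶜ) ∧
    (∀ n : ℕ, ({n} : Set ℕ) = Set.univ \ ({n} : Set ℕ)ᶜ) :=
  stmt_4_general S
end

section
/- Let A and B be Boolean frames, and let A × B be their product (componentwise Boolean operations and unary operation (a, b) ↦ (f_A(a), f_B(b))). If HS(A) = SH(A) and HS(B) = SH(B), then HS(A × B) = SH(A × B). -/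
universe u v

/-- `φ` is a homomorphism of Boolean frames `(α, f) → (β, g)`. -/
def IsHom {α : Type u} {β : Type v} [BooleanAlgebra α] [BooleanAlgebra β]
    (f : α → α) (g : β → β) (φ : α → β) : Prop :=
  φ ⊥ = ⊥ ∧ (∀ x y, φ (x ⊓ y) = φ x ⊓ φ y) ∧ (∀ x, φ xᶜ = (φ x)ᶜ) ∧ ∀ x, φ (f x) = g (φ x)

/-- `(δ, g) ∈ HS(α, f)`: `(δ, g)` is a homomorphic image of a subalgebra of `(α, f)`. -/
def MemHS {α δ : Type u} [BooleanAlgebra α] [BooleanAlgebra δ] (f : α → α) (g : δ → δ) : Prop :=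
  ∃ (γ : Type u) (iγ : BooleanAlgebra γ) (h : γ → γ) (i : γ → α) (s : γ → δ),
    @IsHom γ α iγ _ h f i ∧ Function.Injective i ∧
    @IsHom γ δ iγ _ h g s ∧ Function.Surjective s

/-- `(δ, g) ∈ SH(α, f)`: `(δ, g)` embeds into a homomorphic image of `(α, f)`. -/
def MemSH {α δ : Type u} [BooleanAlgebra α] [BooleanAlgebra δ] (f : α → α) (g : δ → δ) : Prop :=
  ∃ (γ : Type u) (iγ : BooleanAlgebra γ) (h : γ → γ) (s : α → γ) (i : δ → γ),
    @IsHom α γ _ iγ f h s ∧ Function.Surjective s ∧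
    @IsHom δ γ _ iγ g h i ∧ Function.Injective i


/-! Let `C ≤ A × B` and let `s : C ↠ D`. Write `θ = ker s` and `ηᵢ` for the kernels of the two
projections restricted to `C`, so `η₁ ⊓ η₂ = Δ`. Congruences of Boolean frames permute (the
Maltsev term `x ∆ y ∆ z` is a Boolean term), so `θ ∘ ηᵢ` is the join `θ ⊔ ηᵢ`, and congruence
distributivity gives `(θ ∘ η₁) ⊓ (θ ∘ η₂) = θ ∘ (η₁ ⊓ η₂) = θ`. Hence `D ≅ C/θ` embeds into
`C/(θ ∘ η₁) × C/(θ ∘ η₂)`. Each factor `C/(θ ∘ ηᵢ)` is a quotient of `C/ηᵢ`, a subalgebra of the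
`i`-th factor, so it lies in `HS = SH` of that factor; and `SH(A) × SH(B) ⊆ SH(A × B)`.
The inclusion `SH ⊆ HS` holds for every algebra, via a pullback. -/

universe w

open Function
open scoped symmDiff

section Congruence

variable {α : Type u} [BooleanAlgebra α] {f : α → α} {Θ Φ Ψ : α → α → Prop}

namespace IsCongr

lemma sup (h : IsCongr f Θ) {x y x' y' : α} (h₁ : Θ x y) (h₂ : Θ x' y') :
    Θ (x ⊔ x') (y ⊔ y') := by
  simpa only [compl_inf, compl_compl] using h.compl (h.inf (h.compl h₁) (h.compl h₂))

lemma symmDiff (h : IsCongr f Θ) {x y x' y' : α} (h₁ : Θ x y) (h₂ : Θ x' y') :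
    Θ (x ∆ x') (y ∆ y') := by
  simp only [symmDiff_eq]
  exact h.sup (h.inf h₁ (h.compl h₂)) (h.inf h₂ (h.compl h₁))

lemma iff_symmDiff_bot (h : IsCongr f Θ) {x y : α} : Θ x y ↔ Θ (x ∆ y) ⊥ := by
  refine ⟨fun hxy => ?_, fun hxy => ?_⟩
  · simpa only [symmDiff_self] using h.symmDiff hxy (h.refl y)
  · simpa only [symmDiff_symmDiff_cancel_right, bot_symmDiff] using h.symmDiff hxy (h.refl y)

/-- Congruences of a Boolean frame permute: `x Ψ z Θ y` gives `x Θ (x ∆ z ∆ y) Ψ y`. -/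
lemma comp_swap (hΘ : IsCongr f Θ) (hΨ : IsCongr f Ψ) {x y : α}
    (hxy : Relation.Comp Ψ Θ x y) : Relation.Comp Θ Ψ x y := by
  obtain ⟨z, hxz, hzy⟩ := hxy
  refine ⟨x ∆ z ∆ y, hΘ.symm ?_, ?_⟩
  · simpa only [symmDiff_symmDiff_cancel_right] using
      hΘ.symmDiff (hΘ.refl (x ∆ z)) (hΘ.symm hzy)
  · simpa only [symmDiff_self, bot_symmDiff] using
      hΨ.symmDiff (hΨ.symmDiff hxz (hΨ.refl z)) (hΨ.refl y)

lemma comp (hΘ : IsCongr f Θ) (hΨ : IsCongr f Ψ) : IsCongr f (Relation.Comp Θ Ψ) where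
  refl x := ⟨x, hΘ.refl x, hΨ.refl x⟩
  symm := fun ⟨z, hxz, hzy⟩ => hΘ.comp_swap hΨ ⟨z, hΨ.symm hzy, hΘ.symm hxz⟩
  trans := fun ⟨_, hxa, hay⟩ ⟨_, hyb, hbz⟩ =>
    let ⟨w, haw, hwb⟩ := hΘ.comp_swap hΨ ⟨_, hay, hyb⟩
    ⟨w, hΘ.trans hxa haw, hΨ.trans hwb hbz⟩
  inf := fun ⟨a, hxa, hay⟩ ⟨a', hxa', hay'⟩ => ⟨a ⊓ a', hΘ.inf hxa hxa', hΨ.inf hay hay'⟩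
  compl := fun ⟨a, hxa, hay⟩ => ⟨aᶜ, hΘ.compl hxa, hΨ.compl hay⟩
  map := fun ⟨a, hxa, hay⟩ => ⟨f a, hΘ.map hxa, hΨ.map hay⟩

/-- Congruence distributivity `(Θ ∘ Φ) ⊓ (Θ ∘ Ψ) ≤ Θ ∘ (Φ ⊓ Ψ)` in the case `Φ ⊓ Ψ = Δ`. With
`d = x ∆ y`: from `d Θ a Φ ⊥` and `d Θ b Ψ ⊥`, `a ⊓ b` is `Φ`- and `Ψ`-related to `⊥`, hence `⊥`,
so `d = d ⊓ d Θ a ⊓ b = ⊥`. -/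
lemma of_comp_of_comp (hΘ : IsCongr f Θ) (hΦ : IsCongr f Φ) (hΨ : IsCongr f Ψ)
    (hΦΨ : ∀ x y, Φ x y → Ψ x y → x = y) {x y : α}
    (hΦxy : Relation.Comp Θ Φ x y) (hΨxy : Relation.Comp Θ Ψ x y) : Θ x y := by
  obtain ⟨a, hxa, hay⟩ := hΦxy
  obtain ⟨b, hxb, hby⟩ := hΨxy
  have ha : Φ (a ∆ y) ⊥ := hΦ.iff_symmDiff_bot.1 hay
  have hb : Ψ (b ∆ y) ⊥ := hΨ.iff_symmDiff_bot.1 hby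
  have hab : a ∆ y ⊓ b ∆ y = ⊥ := hΦΨ _ _
    (by simpa only [bot_inf_eq] using hΦ.inf ha (hΦ.refl (b ∆ y)))
    (by simpa only [inf_bot_eq] using hΨ.inf (hΨ.refl (a ∆ y)) hb)
  have hd := hΘ.inf (hΘ.symmDiff hxa (hΘ.refl y)) (hΘ.symmDiff hxb (hΘ.refl y))
  rw [inf_idem, hab] at hd
  exact hΘ.iff_symmDiff_bot.2 hd

end IsCongr

end Congruence

namespace IsHom

variable {α : Type u} {β : Type v} {γ : Type w} [BooleanAlgebra α] [BooleanAlgebra β]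
  [BooleanAlgebra γ] {f : α → α} {g : β → β} {h : γ → γ} {φ : α → β}

lemma isCongr_ker (hφ : IsHom f g φ) : IsCongr f (fun x y => φ x = φ y) where
  refl _ := rfl
  symm := Eq.symm
  trans := Eq.trans
  inf h₁ h₂ := by simp only [hφ.2.1, h₁, h₂]
  compl h₁ := by simp only [hφ.2.2.1, h₁]
  map h₁ := by simp only [hφ.2.2.2, h₁]

lemma comp {ψ : β → γ} (hψ : IsHom g h ψ) (hφ : IsHom f g φ) : IsHom f h (ψ ∘ φ) := by
  refine ⟨?_, fun x y => ?_, fun x => ?_, fun x => ?_⟩ <;>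
    simp only [comp_apply, hφ.1, hψ.1, hφ.2.1, hψ.2.1, hφ.2.2.1, hψ.2.2.1, hφ.2.2.2, hψ.2.2.2]

lemma fst : IsHom (Prod.map f g) f Prod.fst :=
  ⟨rfl, fun _ _ => rfl, fun _ => rfl, fun _ => rfl⟩

lemma snd : IsHom (Prod.map f g) g Prod.snd :=
  ⟨rfl, fun _ _ => rfl, fun _ => rfl, fun _ => rfl⟩

lemma prodMk {ψ : α → γ} (hφ : IsHom f g φ) (hψ : IsHom f h ψ) :
    IsHom f (Prod.map g h) (fun x => (φ x, ψ x)) := by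
  refine ⟨?_, fun x y => ?_, fun x => ?_, fun x => ?_⟩ <;>
    simp only [hφ.1, hψ.1, hφ.2.1, hψ.2.1, hφ.2.2.1, hψ.2.2.1, hφ.2.2.2, hψ.2.2.2] <;> rfl

lemma prodMap {α' : Type u} {β' : Type v} [BooleanAlgebra α'] [BooleanAlgebra β']
    {f' : α' → α'} {g' : β' → β'} {φ' : α' → β'} (hφ : IsHom f g φ) (hφ' : IsHom f' g' φ') :
    IsHom (Prod.map f f') (Prod.map g g') (Prod.map φ φ') :=
  (hφ.comp fst).prodMk (hφ'.comp snd)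

lemma exists_comp_eq {s : α → β} {k : α → γ} (hs : IsHom f g s) (hs_surj : Surjective s)
    (hk : IsHom f h k) (hker : ∀ x y, s x = s y → k x = k y) :
    ∃ m : β → γ, IsHom g h m ∧ m ∘ s = k := by
  obtain ⟨σ, hσ⟩ := hs_surj.hasRightInverse
  have hkσ : ∀ x, k (σ (s x)) = k x := fun x => hker _ _ (hσ (s x))
  refine ⟨k ∘ σ, ⟨?_, fun x y => ?_, fun x => ?_, fun x => ?_⟩, funext hkσ⟩
  · rw [comp_apply, ← hs.1, hkσ, hk.1]
  · obtain ⟨x, rfl⟩ := hs_surj x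
    obtain ⟨y, rfl⟩ := hs_surj y
    simp only [comp_apply, ← hs.2.1, hkσ, hk.2.1]
  · obtain ⟨x, rfl⟩ := hs_surj x
    simp only [comp_apply, ← hs.2.2.1, hkσ, hk.2.2.1]
  · obtain ⟨x, rfl⟩ := hs_surj x
    simp only [comp_apply, ← hs.2.2.2, hkσ, hk.2.2.2]

end IsHom

section Quotient

variable {α : Type u} [BooleanAlgebra α] {f : α → α} {Θ : α → α → Prop}

def IsCongr.setoid (h : IsCongr f Θ) : Setoid α := ⟨Θ, ⟨h.refl, h.symm, h.trans⟩⟩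

def CongrQuotient (h : IsCongr f Θ) : Type u := Quotient h.setoid

namespace CongrQuotient

variable (h : IsCongr f Θ)

def mk (x : α) : CongrQuotient h := Quotient.mk h.setoid x

lemma mk_surjective : Surjective (mk h) := Quotient.mk_surjective

variable {h} in
lemma mk_eq_mk {x y : α} : mk h x = mk h y ↔ Θ x y := Quotient.eq (r := h.setoid)

variable {h} in
@[elab_as_elim]
lemma ind {P : CongrQuotient h → Prop} (hP : ∀ x, P (mk h x)) (q : CongrQuotient h) : P q :=
  Quotient.ind hP q

instance : Min (CongrQuotient h) := ⟨Quotient.map₂ (· ⊓ ·) fun _ _ h₁ _ _ h₂ => h.inf h₁ h₂⟩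
instance : Max (CongrQuotient h) := ⟨Quotient.map₂ (· ⊔ ·) fun _ _ h₁ _ _ h₂ => h.sup h₁ h₂⟩
instance : Compl (CongrQuotient h) := ⟨Quotient.map (·ᶜ) fun _ _ => h.compl⟩
instance : Top (CongrQuotient h) := ⟨mk h ⊤⟩
instance : Bot (CongrQuotient h) := ⟨mk h ⊥⟩

def op : CongrQuotient h → CongrQuotient h := Quotient.map f fun _ _ => h.map

instance : Lattice (CongrQuotient h) :=
  Lattice.mk'
    (fun a b => ind (fun x => ind (fun y => congrArg (mk h) (sup_comm x y)) b) a)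
    (fun a b c => ind (fun x => ind (fun y => ind (fun z =>
      congrArg (mk h) (sup_assoc x y z)) c) b) a)
    (fun a b => ind (fun x => ind (fun y => congrArg (mk h) (inf_comm x y)) b) a)
    (fun a b c => ind (fun x => ind (fun y => ind (fun z =>
      congrArg (mk h) (inf_assoc x y z)) c) b) a)
    (fun a b => ind (fun x => ind (fun y => congrArg (mk h) (sup_inf_self (a := x) (b := y))) b) a)
    (fun a b => ind (fun x => ind (fun y => congrArg (mk h) (inf_sup_self (a := x) (b := y))) b) a)

instance : BooleanAlgebra (CongrQuotient h) where
  le_sup_inf a b c := ind (fun x => ind (fun y => ind (fun z =>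
    sup_eq_right.1 (congrArg (mk h) (sup_eq_right.2 le_sup_inf))) c) b) a
  inf_compl_le_bot a := ind (fun x => sup_eq_right.1 (congrArg (mk h) (by simp))) a
  top_le_sup_compl a := ind (fun x => sup_eq_right.1 (congrArg (mk h) (by simp))) a
  le_top a := ind (fun x => sup_eq_right.1 (congrArg (mk h) (sup_top_eq x))) a
  bot_le a := ind (fun x => sup_eq_right.1 (congrArg (mk h) (bot_sup_eq x))) a

lemma isHom_mk : IsHom f (op h) (mk h) := ⟨rfl, fun _ _ => rfl, fun _ => rfl, fun _ => rfl⟩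

end CongrQuotient

end Quotient

namespace IsSubalg

variable {α : Type u} [BooleanAlgebra α] {f : α → α} {B : Set α}

lemma sup_mem (hB : IsSubalg f B) {x y : α} (hx : x ∈ B) (hy : y ∈ B) : x ⊔ y ∈ B := by
  simpa only [compl_inf, compl_compl] using hB.2.2.1 _ (hB.2.1 _ (hB.2.2.1 x hx) _ (hB.2.2.1 y hy))

lemma top_mem (hB : IsSubalg f B) : ⊤ ∈ B := compl_bot (α := α) ▸ hB.2.2.1 ⊥ hB.1

abbrev booleanAlgebra (hB : IsSubalg f B) : BooleanAlgebra B :=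
  letI : Min B := ⟨fun x y => ⟨x ⊓ y, hB.2.1 _ x.2 _ y.2⟩⟩
  letI : Max B := ⟨fun x y => ⟨x ⊔ y, hB.sup_mem x.2 y.2⟩⟩
  letI : Compl B := ⟨fun x => ⟨xᶜ, hB.2.2.1 _ x.2⟩⟩
  letI : Bot B := ⟨⟨⊥, hB.1⟩⟩
  letI : Top B := ⟨⟨⊤, hB.top_mem⟩⟩
  letI : SDiff B := ⟨fun x y => ⟨x \ y, sdiff_eq (x := x.1) ▸ hB.2.1 _ x.2 _ (hB.2.2.1 _ y.2)⟩⟩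
  letI : HImp B := ⟨fun x y => ⟨x ⇨ y, himp_eq (x := x.1) ▸ hB.sup_mem y.2 (hB.2.2.1 _ x.2)⟩⟩
  Subtype.coe_injective.booleanAlgebra _ Iff.rfl Iff.rfl (fun _ _ => rfl) (fun _ _ => rfl) rfl rfl
    (fun _ => rfl) (fun _ _ => rfl) (fun _ _ => rfl)

def op (hB : IsSubalg f B) : B → B := fun x => ⟨f x, hB.2.2.2 _ x.2⟩

lemma isHom_val (hB : IsSubalg f B) : @IsHom B α hB.booleanAlgebra _ hB.op f Subtype.val :=
  ⟨rfl, fun _ _ => rfl, fun _ => rfl, fun _ => rfl⟩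

end IsSubalg

section HS_SH

variable {α β δ ε : Type u} [BooleanAlgebra α] [BooleanAlgebra β] [BooleanAlgebra δ]
  [BooleanAlgebra ε] {f : α → α} {f' : β → β} {g : δ → δ} {g' : ε → ε}

/-- If `s : A ↠ C` and `i : D ↪ C`, then `D` is an image of the pullback of `s` and
`i`, a subalgebra of `A × D`. -/
lemma MemSH.memHS (hSH : MemSH f g) : MemHS f g := by
  obtain ⟨γ, iγ, h, s, i, hs, hs_surj, hi, hi_inj⟩ := hSH
  let P : Set (α × δ) := {p | s p.1 = i p.2}
  have hP : IsSubalg (Prod.map f g) P := by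
    refine ⟨?_, fun p hp q hq => ?_, fun p hp => ?_, fun p hp => ?_⟩
    · exact hs.1.trans hi.1.symm
    · exact (hs.2.1 _ _).trans ((congrArg₂ _ hp hq).trans (hi.2.1 _ _).symm)
    · exact (hs.2.2.1 _).trans ((congrArg _ hp).trans (hi.2.2.1 _).symm)
    · exact (hs.2.2.2 _).trans ((congrArg h hp).trans (hi.2.2.2 _).symm)
  let _ : BooleanAlgebra P := hP.booleanAlgebra
  refine ⟨P, hP.booleanAlgebra, hP.op, Prod.fst ∘ Subtype.val, Prod.snd ∘ Subtype.val,
    IsHom.fst.comp hP.isHom_val, fun p q hpq => ?_, IsHom.snd.comp hP.isHom_val,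
    fun d => ?_⟩
  · exact Subtype.ext (Prod.ext hpq (hi_inj (p.2.symm.trans ((congrArg s hpq).trans q.2))))
  · obtain ⟨a, ha⟩ := hs_surj (i d)
    exact ⟨⟨(a, d), ha⟩, rfl⟩

lemma MemSH.prod (hA : MemSH f g) (hB : MemSH f' g') : MemSH (Prod.map f f') (Prod.map g g') := by
  obtain ⟨γ, iγ, h, s, i, hs, hs_surj, hi, hi_inj⟩ := hA
  obtain ⟨γ', iγ', h', s', i', hs', hs'_surj, hi', hi'_inj⟩ := hB
  exact ⟨γ × γ', inferInstance, Prod.map h h', Prod.map s s', Prod.map i i', hs.prodMap hs',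
    hs_surj.prodMap hs'_surj, hi.prodMap hi', hi_inj.prodMap hi'_inj⟩

lemma MemSH.of_injective {k : ε → δ} (hSH : MemSH f g) (hk : IsHom g' g k)
    (hk_inj : Injective k) : MemSH f g' := by
  obtain ⟨γ, iγ, h, s, i, hs, hs_surj, hi, hi_inj⟩ := hSH
  exact ⟨γ, iγ, h, s, i ∘ k, hs, hs_surj, hi.comp hk, hi_inj.comp hk_inj⟩

/-- `C/Ψ` is a quotient of `C/ker φ`, which embeds into `α`. -/
lemma memHS_congrQuotient {φ : β → α} (hφ : IsHom f' f φ) {Ψ : β → β → Prop}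
    (hΨ : IsCongr f' Ψ) (hker : ∀ x y, φ x = φ y → Ψ x y) :
    MemHS f (CongrQuotient.op hΨ) := by
  have hκ := hφ.isCongr_ker
  have hmk := CongrQuotient.isHom_mk hκ
  have hmk_surj := CongrQuotient.mk_surjective hκ
  have hmk_eq : ∀ {x y}, CongrQuotient.mk hκ x = CongrQuotient.mk hκ y ↔ φ x = φ y :=
    CongrQuotient.mk_eq_mk
  obtain ⟨e, he, he_comp⟩ := hmk.exists_comp_eq hmk_surj hφ fun _ _ => hmk_eq.1
  obtain ⟨p, hp, hp_comp⟩ := hmk.exists_comp_eq hmk_surj (CongrQuotient.isHom_mk hΨ)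
    fun x y hxy => CongrQuotient.mk_eq_mk.2 (hker x y (hmk_eq.1 hxy))
  refine ⟨_, inferInstance, _, e, p, he, fun a b hab => ?_, hp, ?_⟩
  · obtain ⟨x, rfl⟩ := hmk_surj a
    obtain ⟨y, rfl⟩ := hmk_surj b
    exact hmk_eq.2 ((congrFun he_comp x).symm.trans (hab.trans (congrFun he_comp y)))
  · exact Surjective.of_comp (hp_comp ▸ CongrQuotient.mk_surjective hΨ)

end HS_SH

/-- if `HS(A) = SH(A)` and `HS(B) = SH(B)` for Boolean frames `A`, `B`,
then `HS(A × B) = SH(A × B)` for the product frame. -/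
theorem stmt_7 {α β : Type u} [iα : BooleanAlgebra α] [iβ : BooleanAlgebra β]
    (fA : α → α) (fB : β → β)
    (hA : ∀ (δ : Type u) (iδ : BooleanAlgebra δ) (g : δ → δ),
      @MemHS α δ iα iδ fA g ↔ @MemSH α δ iα iδ fA g)
    (hB : ∀ (δ : Type u) (iδ : BooleanAlgebra δ) (g : δ → δ),
      @MemHS β δ iβ iδ fB g ↔ @MemSH β δ iβ iδ fB g) :
    ∀ (δ : Type u) (iδ : BooleanAlgebra δ) (g : δ → δ),
      @MemHS (α × β) δ _ iδ (fun p => (fA p.1, fB p.2)) g ↔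
        @MemSH (α × β) δ _ iδ (fun p => (fA p.1, fB p.2)) g := by
  intro δ iδ g
  refine ⟨fun hHS => ?_, MemSH.memHS⟩
  obtain ⟨γ, iγ, h, i, s, hi, hi_inj, hs, hs_surj⟩ := hHS
  have hπ₁ : IsHom h fA (Prod.fst ∘ i) := IsHom.fst.comp hi
  have hπ₂ : IsHom h fB (Prod.snd ∘ i) := IsHom.snd.comp hi
  have hθ := hs.isCongr_ker
  have hφ₁ := hθ.comp hπ₁.isCongr_ker
  have hφ₂ := hθ.comp hπ₂.isCongr_ker
  have hSH₁ := (hA _ _ _).1 (memHS_congrQuotient hπ₁ hφ₁ fun x _ hxy => ⟨x, rfl, hxy⟩)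
  have hSH₂ := (hB _ _ _).1 (memHS_congrQuotient hπ₂ hφ₂ fun x _ hxy => ⟨x, rfl, hxy⟩)
  obtain ⟨m, hm, hm_comp⟩ := hs.exists_comp_eq hs_surj
    ((CongrQuotient.isHom_mk hφ₁).prodMk (CongrQuotient.isHom_mk hφ₂))
    fun x y hxy => Prod.ext (CongrQuotient.mk_eq_mk.2 ⟨y, hxy, rfl⟩)
      (CongrQuotient.mk_eq_mk.2 ⟨y, hxy, rfl⟩)
  refine (hSH₁.prod hSH₂).of_injective hm fun d d' hdd' => ?_
  obtain ⟨x, rfl⟩ := hs_surj d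
  obtain ⟨y, rfl⟩ := hs_surj d'
  have hxy := (congrFun hm_comp x).symm.trans (hdd'.trans (congrFun hm_comp y))
  simp only [comp_apply, Prod.ext_iff, CongrQuotient.mk_eq_mk] at hxy
  exact hθ.of_comp_of_comp hπ₁.isCongr_ker hπ₂.isCongr_ker
    (fun _ _ h₁ h₂ => hi_inj (Prod.ext h₁ h₂)) hxy.1 hxy.2
end

section
/- Let 𝔅 be the Boolean frame on the powerset of ℕ with f : P(ℕ) → P(ℕ) defined by f(X) = ℕ if 0 ∈ X, and f(X) = {n − 1 : n ∈ X} otherwise. Then every subalgebra of 𝔅 is simple: for every subset C of P(ℕ) containing ∅ and closed under intersection, complement, and f, every congruence of the Boolean frame C is either the equality relation or the full relation. -/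
universe u v

open Classical in
/-- The operation of the Boolean frame `𝔅` on the powerset of `ℕ`:
`f(X) = ℕ` if `0 ∈ X`, and `f(X) = {n - 1 : n ∈ X}` otherwise. -/
noncomputable def fB (X : Set ℕ) : Set ℕ :=
  if 0 ∈ X then Set.univ else (fun n => n - 1) '' X

lemma fB_empty : fB ∅ = ∅ := by
  simp [fB]

lemma fB_univ : fB Set.univ = Set.univ := by
  simp [fB]

lemma mem_fB_iter : ∀ (n : ℕ) (X : Set ℕ), n ∈ X → 0 ∈ fB^[n] X := by
  intro n
  induction n with
  | zero => intro X hX; simpa using hX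
  | succ n ih =>
    intro X hX
    by_cases h0 : 0 ∈ X
    · have : fB X = Set.univ := by simp [fB, h0]
      rw [Function.iterate_succ_apply, this]
      have : fB^[n] Set.univ = Set.univ := by
        clear * -
        induction n with
        | zero => rfl
        | succ n ih => rw [Function.iterate_succ_apply, fB_univ, ih]
      simp [this]
    · rw [Function.iterate_succ_apply]
      apply ih
      have : fB X = (fun n => n - 1) '' X := by simp [fB, h0]
      rw [this]
      exact ⟨n + 1, hX, rfl⟩

lemma fB_iter_univ (n : ℕ) (X : Set ℕ) (hX : n ∈ X) : fB^[n + 1] X = Set.univ := by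
  rw [Function.iterate_succ_apply', fB]
  simp [mem_fB_iter n X hX]

lemma fB_iter_empty (n : ℕ) : fB^[n] (∅ : Set ℕ) = ∅ := by
  induction n with
  | zero => rfl
  | succ n ih => rw [Function.iterate_succ_apply, fB_empty, ih]

/-- every subalgebra of the Boolean frame `𝔅 = (𝒫(ℕ), fB)` is simple. -/
theorem stmt_9 :
    ∀ C : Set (Set ℕ), (∅ : Set ℕ) ∈ C → (∀ x ∈ C, ∀ y ∈ C, x ⊓ y ∈ C) →
      (∀ x ∈ C, xᶜ ∈ C) → (∀ x ∈ C, fB x ∈ C) →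
      ∀ Θ : Set ℕ → Set ℕ → Prop, IsCongrOn fB C Θ →
        (∀ x y, Θ x y ↔ (x = y ∧ x ∈ C)) ∨ (∀ x y, Θ x y ↔ (x ∈ C ∧ y ∈ C)) := by
  intro C hbot hinf hcompl hf Θ hΘ
  have hiter : ∀ (n : ℕ) {x y : Set ℕ}, Θ x y → Θ (fB^[n] x) (fB^[n] y) := by
    intro n
    induction n with
    | zero => intro x y h; simpa using h
    | succ n ih =>
      intro x y h
      rw [Function.iterate_succ_apply', Function.iterate_succ_apply']
      exact hΘ.map (ih h)
  by_cases hdiag : ∀ x y, Θ x y → x = y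
  · left
    intro x y
    constructor
    · intro h; exact ⟨hdiag x y h, (hΘ.dom h).1⟩
    · rintro ⟨rfl, hx⟩; exact hΘ.refl x hx
  · right
    push_neg at hdiag
    obtain ⟨x, y, hxy, hne⟩ := hdiag
    -- get a nonempty a with Θ a ∅
    have key : ∃ a : Set ℕ, Θ a ∅ ∧ a ≠ ∅ := by
      have h1 : Θ (x ⊓ yᶜ) (y ⊓ yᶜ) := hΘ.inf hxy (hΘ.compl (hΘ.refl y (hΘ.dom hxy).2))
      have h2 : Θ (y ⊓ xᶜ) (x ⊓ xᶜ) := hΘ.inf (hΘ.symm hxy) (hΘ.compl (hΘ.refl x (hΘ.dom hxy).1))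
      have e1 : (y ⊓ yᶜ : Set ℕ) = ∅ := by simp
      have e2 : (x ⊓ xᶜ : Set ℕ) = ∅ := by simp
      rw [e1] at h1; rw [e2] at h2
      by_cases hd : (x ⊓ yᶜ : Set ℕ) = ∅
      · refine ⟨y ⊓ xᶜ, h2, ?_⟩
        intro hd2
        apply hne
        have hxy' : x ⊆ y := by
          intro a ha
          by_contra hay
          exact Set.eq_empty_iff_forall_notMem.mp hd a ⟨ha, hay⟩
        have hyx' : y ⊆ x := by
          intro a ha
          by_contra hax
          exact Set.eq_empty_iff_forall_notMem.mp hd2 a ⟨ha, hax⟩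
        exact Set.Subset.antisymm hxy' hyx'
      · exact ⟨x ⊓ yᶜ, h1, hd⟩
    obtain ⟨a, haθ, hane⟩ := key
    obtain ⟨n, hn⟩ := Set.nonempty_iff_ne_empty.mpr hane
    have huniv : Θ Set.univ ∅ := by
      have := hiter (n + 1) haθ
      rwa [fB_iter_univ n a hn, fB_iter_empty] at this
    intro u v
    constructor
    · intro h; exact hΘ.dom h
    · rintro ⟨hu, hv⟩
      have hub : Θ u ∅ := by
        have := hΘ.inf (hΘ.refl u hu) huniv
        simpa using this
      have hvb : Θ v ∅ := by
        have := hΘ.inf (hΘ.refl v hv) huniv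
        simpa using this
      exact hΘ.trans hub (hΘ.symm hvb)
end

section
/- Let 𝔅 be the Boolean frame on the powerset of ℕ with f : P(ℕ) → P(ℕ) defined by f(X) = ℕ if 0 ∈ X, and f(X) = {n − 1 : n ∈ X} otherwise, and let U be a nonprincipal ultrafilter on ℕ. Then the ultrapower 𝔅^ℕ/U is not simple: it has a congruence that is neither the equality relation nor the full relation. -/
universe u v

open Filter in
/-- The ultrapower Boolean algebra: the Boolean operations on the quotient
`Filter.Germ (U : Filter I) α` of `I → α` by `U`-a.e. equality are defined
pointwise on representatives. -/
noncomputable instance Filter.Germ.instBooleanAlgebraGerm {ι : Type u} {l : Filter ι}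
    {β : Type v} [BooleanAlgebra β] : BooleanAlgebra (Germ l β) where
  __ := (inferInstance : DistribLattice (Germ l β))
  __ := (inferInstance : BoundedOrder (Germ l β))
  compl := map compl
  sdiff x y := x ⊓ (map compl y)
  himp x y := (map compl x) ⊔ y
  inf_compl_le_bot x := inductionOn x fun f => Eventually.of_forall fun i => by simp
  top_le_sup_compl x := inductionOn x fun f => Eventually.of_forall fun i => by simp
  sdiff_eq x y := rfl
  himp_eq x y := by
    refine inductionOn₂ x y fun f g => ?_
    change (↑(fun i => (f i)ᶜ) ⊔ (g : Germ l β)) = _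
    exact sup_comm _ _

open Filter in
noncomputable def phiU (U : Ultrafilter ℕ) (g : Germ (U : Filter ℕ) (Set ℕ)) : Set ℕ :=
  {n | Filter.Germ.LiftPred (fun X => n ∈ X) g}

lemma fB_of_mem {X : Set ℕ} (h : 0 ∈ X) : fB X = Set.univ := by simp [fB, h]

lemma mem_fB_of_not_mem {X : Set ℕ} (h : 0 ∉ X) (n : ℕ) : n ∈ fB X ↔ n + 1 ∈ X := by
  simp only [fB, if_neg h, Set.mem_image]
  constructor
  · rintro ⟨m, hm, hmn⟩
    have : m ≠ 0 := fun e => h (e ▸ hm)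
    have : m = n + 1 := by omega
    exact this ▸ hm
  · intro hn; exact ⟨n + 1, hn, rfl⟩

open Filter in
lemma phiU_map (U : Ultrafilter ℕ) (x : Germ (U : Filter ℕ) (Set ℕ)) :
    phiU U (Filter.Germ.map fB x) = fB (phiU U x) := by
  induction x using Filter.Germ.inductionOn with
  | h f =>
  by_cases hc : ∀ᶠ i in (U : Filter ℕ), 0 ∈ f i
  · have h0 : 0 ∈ phiU U (↑f) := hc
    rw [fB_of_mem h0]
    ext n
    simp only [Set.mem_univ, iff_true]
    show ∀ᶠ i in (U : Filter ℕ), n ∈ fB (f i)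
    exact hc.mono fun i hi => by rw [fB_of_mem hi]; trivial
  · have hc' : ∀ᶠ i in (U : Filter ℕ), 0 ∉ f i := (U.eventually_not).2 hc
    have h0 : 0 ∉ phiU U (↑f) := hc
    ext n
    show (∀ᶠ i in (U : Filter ℕ), n ∈ fB (f i)) ↔ n ∈ fB (phiU U ↑f)
    rw [mem_fB_of_not_mem h0]
    have : (∀ᶠ i in (U : Filter ℕ), n ∈ fB (f i)) ↔ ∀ᶠ i in (U : Filter ℕ), n + 1 ∈ f i := by
      constructor
      · intro h; exact (hc'.and h).mono fun i ⟨h1, h2⟩ => (mem_fB_of_not_mem h1 n).1 h2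
      · intro h; exact (hc'.and h).mono fun i ⟨h1, h2⟩ => (mem_fB_of_not_mem h1 n).2 h2
    exact this

/-- for a nonprincipal ultrafilter `U` on `ℕ`, the ultrapower
`𝔅^ℕ/U` of the Boolean frame `𝔅 = (𝒫(ℕ), fB)` is not simple: it has a congruence
that is neither the equality relation nor the full relation. -/
theorem stmt_10 (U : Ultrafilter ℕ) (hU : ∀ a : ℕ, (U : Filter ℕ) ≠ pure a) :
    ∃ Θ : Filter.Germ (U : Filter ℕ) (Set ℕ) → Filter.Germ (U : Filter ℕ) (Set ℕ) → Prop,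
      IsCongr (Filter.Germ.map fB) Θ ∧
      ¬ (∀ x y, Θ x y ↔ x = y) ∧ ¬ (∀ x y, Θ x y) := by
  classical
  refine ⟨fun x y => phiU U x = phiU U y, ⟨fun x => rfl, fun h => h.symm, fun h1 h2 => h1.trans h2,
    ?_, ?_, ?_⟩, ?_, ?_⟩
  · -- inf
    intro x y x' y' hxy hxy'
    induction x using Filter.Germ.inductionOn with | h f =>
    induction y using Filter.Germ.inductionOn with | h g =>
    induction x' using Filter.Germ.inductionOn with | h f' =>
    induction y' using Filter.Germ.inductionOn with | h g' =>
    have key : ∀ a b : ℕ → Set ℕ,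
        phiU U ((↑a : Filter.Germ (U : Filter ℕ) (Set ℕ)) ⊓ ↑b) = phiU U ↑a ∩ phiU U ↑b := by
      intro a b
      ext n
      show (∀ᶠ i in (U : Filter ℕ), n ∈ a i ∩ b i) ↔ _
      simp only [Set.mem_inter_iff, Filter.eventually_and]
      rfl
    rw [key, key, hxy, hxy']
  · -- compl
    intro x y hxy
    induction x using Filter.Germ.inductionOn with | h f =>
    induction y using Filter.Germ.inductionOn with | h g =>
    have key : ∀ a : ℕ → Set ℕ,
        phiU U ((↑a : Filter.Germ (U : Filter ℕ) (Set ℕ))ᶜ) = (phiU U ↑a)ᶜ := by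
      intro a
      ext n
      show (∀ᶠ i in (U : Filter ℕ), n ∈ (a i)ᶜ) ↔ ¬ (∀ᶠ i in (U : Filter ℕ), n ∈ a i)
      rw [← U.eventually_not]
      rfl
    rw [key, key, hxy]
  · -- map
    intro x y hxy
    rw [phiU_map, phiU_map, hxy]
  · -- not equality
    intro h
    have hb : phiU U (↑(fun i => ({i} : Set ℕ))) = phiU U (⊥ : Filter.Germ (U : Filter ℕ) (Set ℕ)) := by
      have h1 : phiU U (↑(fun i => ({i} : Set ℕ))) = ∅ := by
        ext n
        simp only [Set.mem_empty_iff_false, iff_false]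
        intro hn
        have : {i | n ∈ ({i} : Set ℕ)} ∈ (U : Filter ℕ) := hn
        have hsing : {n} ∈ (U : Filter ℕ) := by
          convert this using 1
          ext i; simp [eq_comm]
        exact hU n (Filter.NeBot.eq_pure_iff U.neBot |>.2 hsing)
      have h2 : phiU U (⊥ : Filter.Germ (U : Filter ℕ) (Set ℕ)) = ∅ := by
        ext n
        simp only [Set.mem_empty_iff_false, iff_false]
        intro hn
        exact hn.exists.elim fun i hi => hi
      rw [h1, h2]
    have := (h _ _).1 hb
    have hne : (↑(fun i => ({i} : Set ℕ)) : Filter.Germ (U : Filter ℕ) (Set ℕ)) ≠ ⊥ := by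
      intro he
      have h3 := Filter.Germ.coe_eq.1 (he.trans (Filter.Germ.const_bot (l := (U : Filter ℕ))).symm)
      have := h3.exists
      obtain ⟨i, hi⟩ := this
      exact (Set.singleton_ne_empty i) hi
    exact hne this
  · -- not full
    intro h
    have := h ⊥ ⊤
    have h2 : phiU U (⊥ : Filter.Germ (U : Filter ℕ) (Set ℕ)) = ∅ := by
      ext n
      simp only [Set.mem_empty_iff_false, iff_false]
      intro hn
      exact hn.exists.elim fun i hi => hi
    have h3 : phiU U (⊤ : Filter.Germ (U : Filter ℕ) (Set ℕ)) = Set.univ := by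
      ext n
      simp only [Set.mem_univ, iff_true]
      exact Filter.Eventually.of_forall fun i => trivial
    have this' : phiU U (⊥ : Filter.Germ (U : Filter ℕ) (Set ℕ)) = phiU U ⊤ := this
    rw [h2, h3] at this'
    exact (Set.empty_ne_univ) this'
end

section
/- Let 𝔄 be the Boolean frame whose Boolean algebra is P(ℕ) × P(ℕ) and whose unary operation F is defined by F(a, b) = (f(a), f(b)) if a = b and F(a, b) = (ℕ, ℕ) if a ≠ b, where f(X) = ℕ if 0 ∈ X and f(X) = {n − 1 : n ∈ X} otherwise. Then every subalgebra of 𝔄 is simple, and consequently 𝔄 has the congruence extension property. -/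
universe u v

open Classical in
/-- The operation `F` on `𝒫(ℕ) × 𝒫(ℕ)`: `F(a, b) = (fB a, fB b)` if `a = b`,
and `F(a, b) = (ℕ, ℕ)` otherwise. -/
noncomputable def F12 : Set ℕ × Set ℕ → Set ℕ × Set ℕ := fun p =>
  if p.1 = p.2 then (fB p.1, fB p.2) else (Set.univ, Set.univ)

lemma fB_iter {n : ℕ} {a : Set ℕ} (h : n ∈ a) : fB^[n+1] a = Set.univ := by
  induction n generalizing a with
  | zero => simp [fB, h]
  | succ n ih =>
    rw [Function.iterate_succ_apply]
    apply ih
    by_cases h0 : 0 ∈ a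
    · simp [fB, h0]
    · have : n ∈ (fun m => m - 1) '' a := ⟨n+1, h, rfl⟩
      simpa [fB, h0]

lemma F12_diag (a : Set ℕ) : F12 (a, a) = (fB a, fB a) := if_pos rfl

lemma F12_bot : F12 ⊥ = ⊥ := by
  have : (⊥ : Set ℕ × Set ℕ) = ((∅ : Set ℕ), (∅ : Set ℕ)) := rfl
  rw [this, F12_diag, fB_empty]

lemma F12_iter_bot (k : ℕ) : F12^[k] ⊥ = ⊥ := Function.iterate_fixed F12_bot k

lemma F12_iter_diag (k : ℕ) (a : Set ℕ) : F12^[k] (a, a) = (fB^[k] a, fB^[k] a) := by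
  induction k generalizing a with
  | zero => rfl
  | succ k ih =>
    rw [Function.iterate_succ_apply, F12_diag, ih, ← Function.iterate_succ_apply fB k a]

lemma F12_ndiag {p : Set ℕ × Set ℕ} (h : p.1 ≠ p.2) : F12 p = ⊤ := by
  rw [F12, if_neg h]; rfl

lemma congrOn_iter {α : Type u} [BooleanAlgebra α] {f : α → α} {B : Set α}
    {Θ : α → α → Prop} (hc : IsCongrOn f B Θ) {x y : α} (h : Θ x y) (k : ℕ) :
    Θ (f^[k] x) (f^[k] y) := by
  induction k with
  | zero => exact h
  | succ k ih => rw [Function.iterate_succ_apply', Function.iterate_succ_apply']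
                 exact hc.map ih

/-- If a congruence on a subalgebra of `F12` relates two distinct elements, it is full. -/
lemma full_of_ne {C : Set (Set ℕ × Set ℕ)} {Θ : (Set ℕ × Set ℕ) → (Set ℕ × Set ℕ) → Prop}
    (hC : IsSubalg F12 C) (hc : IsCongrOn F12 C Θ)
    {x y : Set ℕ × Set ℕ} (hxy : Θ x y) (hne : x ≠ y) :
    ∀ u ∈ C, ∀ v ∈ C, Θ u v := by
  obtain ⟨hx, hy⟩ := hc.dom hxy
  -- Θ relates ⊥ to the symmetric difference d
  have h1 : Θ (x ⊓ yᶜ) ⊥ := by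
    have := hc.inf hxy (hc.refl yᶜ (hC.2.2.1 y hy))
    rwa [inf_compl_eq_bot] at this
  have h2 : Θ (y ⊓ xᶜ) ⊥ := by
    have := hc.inf (hc.symm hxy) (hc.refl xᶜ (hC.2.2.1 x hx))
    rwa [inf_compl_eq_bot] at this
  set d : Set ℕ × Set ℕ := (x ⊓ yᶜ) ⊔ (y ⊓ xᶜ) with hd_def
  have hd : Θ ⊥ d := by
    have h3 := hc.compl (hc.inf (hc.compl h1) (hc.compl h2))
    have e1 : ((x ⊓ yᶜ)ᶜ ⊓ (y ⊓ xᶜ)ᶜ)ᶜ = d := by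
      rw [hd_def, compl_inf, compl_compl, compl_compl]
    have e2 : ((⊥ : Set ℕ × Set ℕ)ᶜ ⊓ ⊥ᶜ)ᶜ = ⊥ := by simp
    rw [e1, e2] at h3
    exact hc.symm h3
  have hd_ne : d ≠ ⊥ := by
    intro h
    apply hne
    have : symmDiff x y = ⊥ := by rw [symmDiff_def, sdiff_eq, sdiff_eq, ← hd_def, h]
    exact symmDiff_eq_bot.mp this
  -- get Θ ⊥ ⊤
  have htop : Θ ⊥ ⊤ := by
    by_cases hab : d.1 = d.2
    · have hdpair : d = (d.1, d.1) := Prod.ext_iff.mpr ⟨rfl, hab.symm⟩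
      have ha_ne : d.1 ≠ (∅ : Set ℕ) := by
        intro h
        apply hd_ne
        rw [hdpair, h]; rfl
      obtain ⟨n, hn⟩ := Set.nonempty_iff_ne_empty.mpr ha_ne
      have := congrOn_iter hc hd (n+1)
      rw [F12_iter_bot, hdpair, F12_iter_diag, fB_iter hn] at this
      exact this
    · have := hc.map hd
      rwa [F12_bot, F12_ndiag hab] at this
  intro u hu v hv
  have hbu : Θ ⊥ u := by
    have := hc.inf (hc.refl u hu) htop
    rwa [inf_bot_eq, inf_top_eq] at this
  have hbv : Θ ⊥ v := by
    have := hc.inf (hc.refl v hv) htop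
    rwa [inf_bot_eq, inf_top_eq] at this
  exact hc.trans (hc.symm hbu) hbv

/-- every subalgebra of the Boolean frame `𝔄 = (𝒫(ℕ) × 𝒫(ℕ), F12)`
is simple, and consequently `𝔄` has the congruence extension property. -/
theorem stmt_12 :
    (∀ C : Set (Set ℕ × Set ℕ), IsSubalg F12 C →
      ∀ Θ : (Set ℕ × Set ℕ) → (Set ℕ × Set ℕ) → Prop, IsCongrOn F12 C Θ →
        (∀ x y, Θ x y ↔ (x = y ∧ x ∈ C)) ∨ (∀ x y, Θ x y ↔ (x ∈ C ∧ y ∈ C))) ∧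
    HasCEP F12 := by
  have simple : ∀ C : Set (Set ℕ × Set ℕ), IsSubalg F12 C →
      ∀ Θ : (Set ℕ × Set ℕ) → (Set ℕ × Set ℕ) → Prop, IsCongrOn F12 C Θ →
        (∀ x y, Θ x y ↔ (x = y ∧ x ∈ C)) ∨ (∀ x y, Θ x y ↔ (x ∈ C ∧ y ∈ C)) := by
    intro C hC Θ hc
    by_cases h : ∃ x y, Θ x y ∧ x ≠ y
    · right
      obtain ⟨x, y, hxy, hne⟩ := h
      have hfull := full_of_ne hC hc hxy hne
      intro u v
      exact ⟨fun huv => hc.dom huv, fun ⟨hu, hv⟩ => hfull u hu v hv⟩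
    · left
      push_neg at h
      intro u v
      constructor
      · intro huv; exact ⟨h u v huv, (hc.dom huv).1⟩
      · rintro ⟨rfl, hu⟩; exact hc.refl u hu
  refine ⟨simple, ?_⟩
  intro B hB Θ hc
  rcases simple B hB Θ hc with h | h
  · refine ⟨Eq, ⟨fun _ => rfl, Eq.symm, Eq.trans, ?_, ?_, ?_⟩, ?_⟩
    · rintro _ _ _ _ rfl rfl; rfl
    · rintro _ _ rfl; rfl
    · rintro _ _ rfl; rfl
    · intro x y
      rw [h]
      constructor
      · rintro ⟨rfl, hx⟩; exact ⟨rfl, hx, hx⟩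
      · rintro ⟨rfl, hx, -⟩; exact ⟨rfl, hx⟩
  · refine ⟨fun _ _ => True, ⟨fun _ => trivial, fun _ => trivial, fun _ _ => trivial,
      fun _ _ => trivial, fun _ => trivial, fun _ => trivial⟩, ?_⟩
    intro x y
    rw [h]
    tauto
end

section
/- A Boolean frame (A, f) has the congruence extension property if and only if every principal congruence of every 2-generated subalgebra of (A, f) extends to a congruence of (A, f); that is, if and only if for all x, y ∈ A, letting B be the smallest subalgebra of (A, f) containing x and y, for all a, b ∈ B there is a congruence Ψ of (A, f) with Cg^B(a, b) = Ψ ∩ (B × B). -/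
universe u v

/-- The principal congruence `Cg^B(a, b)` of the Boolean frame with universe `B`:
the smallest congruence of the frame `B` containing the pair `(a, b)`. -/
def CgOn {α : Type u} [BooleanAlgebra α] (f : α → α) (B : Set α) (a b : α) :
    α → α → Prop :=
  fun x y => ∀ Θ : α → α → Prop, IsCongrOn f B Θ → Θ a b → Θ x y

/-- The subalgebra of the Boolean frame `(α, f)` generated by a set `s`: the smallest
subset of `α` containing `s` that contains `⊥` and is closed under `⊓`, complement
and `f`. -/
def Sg {α : Type u} [BooleanAlgebra α] (f : α → α) (s : Set α) : Set α :=
  ⋂₀ {B : Set α | IsSubalg f B ∧ s ⊆ B}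

section AuxCEP

variable {α : Type u} [BooleanAlgebra α]

private lemma sd_aux (u v : α) : u ⊓ ((u ⊓ vᶜ) ⊔ (v ⊓ uᶜ))ᶜ = u ⊓ v := by
  simp only [compl_sup, compl_inf, compl_compl, ← inf_assoc, inf_sup_left, inf_compl_eq_bot,
    bot_sup_eq]
  rw [inf_assoc, inf_compl_eq_bot, inf_bot_eq, bot_sup_eq, inf_right_comm, inf_idem]

private lemma sup_compl_aux (a b : α) : (aᶜ ⊓ bᶜ)ᶜ = a ⊔ b := by simp [compl_inf]

lemma isSubalg_mem_sup {f : α → α} {B : Set α} (hB : IsSubalg f B) {a b : α}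
    (ha : a ∈ B) (hb : b ∈ B) : a ⊔ b ∈ B := by
  have : (aᶜ ⊓ bᶜ)ᶜ ∈ B := hB.2.2.1 _ (hB.2.1 _ (hB.2.2.1 a ha) _ (hB.2.2.1 b hb))
  rwa [sup_compl_aux] at this

lemma isSubalg_mem_sd {f : α → α} {B : Set α} (hB : IsSubalg f B) {u v : α}
    (hu : u ∈ B) (hv : v ∈ B) : (u ⊓ vᶜ) ⊔ (v ⊓ uᶜ) ∈ B :=
  isSubalg_mem_sup hB (hB.2.1 _ hu _ (hB.2.2.1 v hv)) (hB.2.1 _ hv _ (hB.2.2.1 u hu))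

lemma subset_sg (f : α → α) (s : Set α) : s ⊆ Sg f s := fun z hz =>
  Set.mem_sInter.mpr (fun _ hB => hB.2 hz)

lemma sg_subset {f : α → α} {B : Set α} {s : Set α} (hB : IsSubalg f B) (hs : s ⊆ B) :
    Sg f s ⊆ B := fun z hz => Set.mem_sInter.mp hz B ⟨hB, hs⟩

lemma isSubalg_sg (f : α → α) (s : Set α) : IsSubalg f (Sg f s) := by
  refine ⟨Set.mem_sInter.mpr fun B hB => hB.1.1, ?_, ?_, ?_⟩
  · intro a ha b hb
    exact Set.mem_sInter.mpr fun B hB =>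
      hB.1.2.1 a (Set.mem_sInter.mp ha B hB) b (Set.mem_sInter.mp hb B hB)
  · intro a ha
    exact Set.mem_sInter.mpr fun B hB => hB.1.2.2.1 a (Set.mem_sInter.mp ha B hB)
  · intro a ha
    exact Set.mem_sInter.mpr fun B hB => hB.1.2.2.2 a (Set.mem_sInter.mp ha B hB)

variable (f : α → α)

lemma isCongr_sup_bot {Ψ : α → α → Prop} (h : IsCongr f Ψ) {a b : α}
    (ha : Ψ a ⊥) (hb : Ψ b ⊥) : Ψ (a ⊔ b) ⊥ := by
  have := h.compl (h.inf (h.compl ha) (h.compl hb))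
  rwa [compl_bot, inf_top_eq, sup_compl_aux, compl_top] at this

lemma isCongr_symmdiff_bot {Ψ : α → α → Prop} (h : IsCongr f Ψ) {u v : α}
    (huv : Ψ u v) : Ψ ((u ⊓ vᶜ) ⊔ (v ⊓ uᶜ)) ⊥ := by
  have h1 : Ψ (u ⊓ vᶜ) ⊥ := by
    have := h.inf huv (h.refl vᶜ); rwa [inf_compl_eq_bot] at this
  have h2 : Ψ (v ⊓ uᶜ) ⊥ := by
    have := h.inf (h.symm huv) (h.refl uᶜ); rwa [inf_compl_eq_bot] at this
  exact isCongr_sup_bot f h h1 h2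

lemma isCongr_of_symmdiff_bot {Ψ : α → α → Prop} (h : IsCongr f Ψ) {u v : α}
    (he : Ψ ((u ⊓ vᶜ) ⊔ (v ⊓ uᶜ)) ⊥) : Ψ u v := by
  have hec := h.compl he
  rw [compl_bot] at hec
  have h1 : Ψ (u ⊓ v) u := by
    have := h.inf (h.refl u) hec
    rwa [inf_top_eq, sd_aux] at this
  have h2 : Ψ (u ⊓ v) v := by
    have := h.inf (h.refl v) hec
    rw [inf_top_eq, sup_comm, sd_aux, inf_comm] at this
    exact this
  exact h.trans (h.symm h1) h2

lemma isCongrOn_sup_bot {B : Set α} {Θ : α → α → Prop} (h : IsCongrOn f B Θ) {a b : α}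
    (ha : Θ a ⊥) (hb : Θ b ⊥) : Θ (a ⊔ b) ⊥ := by
  have := h.compl (h.inf (h.compl ha) (h.compl hb))
  rwa [compl_bot, inf_top_eq, sup_compl_aux, compl_top] at this

lemma isCongrOn_symmdiff_bot {B : Set α} {Θ : α → α → Prop} (hB : IsSubalg f B)
    (h : IsCongrOn f B Θ) {u v : α} (huv : Θ u v) : Θ ((u ⊓ vᶜ) ⊔ (v ⊓ uᶜ)) ⊥ := by
  obtain ⟨hu, hv⟩ := h.dom huv
  have h1 : Θ (u ⊓ vᶜ) ⊥ := by
    have := h.inf huv (h.refl vᶜ (hB.2.2.1 v hv)); rwa [inf_compl_eq_bot] at this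
  have h2 : Θ (v ⊓ uᶜ) ⊥ := by
    have := h.inf (h.symm huv) (h.refl uᶜ (hB.2.2.1 u hu)); rwa [inf_compl_eq_bot] at this
  exact isCongrOn_sup_bot f h h1 h2

lemma isCongrOn_of_symmdiff_bot {B : Set α} {Θ : α → α → Prop}
    (h : IsCongrOn f B Θ) {u v : α} (hu : u ∈ B) (hv : v ∈ B)
    (he : Θ ((u ⊓ vᶜ) ⊔ (v ⊓ uᶜ)) ⊥) : Θ u v := by
  have hec := h.compl he
  rw [compl_bot] at hec
  have h1 : Θ (u ⊓ v) u := by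
    have := h.inf (h.refl u hu) hec
    rwa [inf_top_eq, sd_aux] at this
  have h2 : Θ (u ⊓ v) v := by
    have := h.inf (h.refl v hv) hec
    rw [inf_top_eq, sup_comm, sd_aux, inf_comm] at this
    exact this
  exact h.trans (h.symm h1) h2

/-- The congruence of `(α, f)` generated by the pair `(d, ⊥)`. -/
def CgA (d : α) : α → α → Prop := fun u v => ∀ Ψ : α → α → Prop, IsCongr f Ψ → Ψ d ⊥ → Ψ u v

lemma isCongr_cgA (d : α) : IsCongr f (CgA f d) where
  refl := fun x Ψ hΨ _ => hΨ.refl x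
  symm := fun h Ψ hΨ hd => hΨ.symm (h Ψ hΨ hd)
  trans := fun h1 h2 Ψ hΨ hd => hΨ.trans (h1 Ψ hΨ hd) (h2 Ψ hΨ hd)
  inf := fun h1 h2 Ψ hΨ hd => hΨ.inf (h1 Ψ hΨ hd) (h2 Ψ hΨ hd)
  compl := fun h Ψ hΨ hd => hΨ.compl (h Ψ hΨ hd)
  map := fun h Ψ hΨ hd => hΨ.map (h Ψ hΨ hd)

lemma cgA_mono {d e : α} (hle : d ≤ e) {u v : α} (h : CgA f d u v) : CgA f e u v := by
  intro Ψ hΨ he'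
  have hd : Ψ d ⊥ := by
    have := hΨ.inf (hΨ.refl d) he'
    rwa [inf_bot_eq, inf_eq_left.mpr hle] at this
  exact h Ψ hΨ hd

lemma isCongrOn_restrict {B S : Set α} {Θ : α → α → Prop} (h : IsCongrOn f B Θ)
    (hS : IsSubalg f S) (hSB : S ⊆ B) :
    IsCongrOn f S (fun u v => Θ u v ∧ u ∈ S ∧ v ∈ S) where
  dom := fun hx => hx.2
  refl := fun z hz => ⟨h.refl z (hSB hz), hz, hz⟩
  symm := fun hx => ⟨h.symm hx.1, hx.2.2, hx.2.1⟩
  trans := fun h1 h2 => ⟨h.trans h1.1 h2.1, h1.2.1, h2.2.2⟩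
  inf := fun h1 h2 => ⟨h.inf h1.1 h2.1, hS.2.1 _ h1.2.1 _ h2.2.1, hS.2.1 _ h1.2.2 _ h2.2.2⟩
  compl := fun hx => ⟨h.compl hx.1, hS.2.2.1 _ hx.2.1, hS.2.2.1 _ hx.2.2⟩
  map := fun hx => ⟨h.map hx.1, hS.2.2.2 _ hx.2.1, hS.2.2.2 _ hx.2.2⟩

lemma isCongrOn_full {S : Set α} (hS : IsSubalg f S) :
    IsCongrOn f S (fun u v => u ∈ S ∧ v ∈ S) where
  dom := fun hx => hx
  refl := fun z hz => ⟨hz, hz⟩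
  symm := fun hx => ⟨hx.2, hx.1⟩
  trans := fun h1 h2 => ⟨h1.1, h2.2⟩
  inf := fun h1 h2 => ⟨hS.2.1 _ h1.1 _ h2.1, hS.2.1 _ h1.2 _ h2.2⟩
  compl := fun hx => ⟨hS.2.2.1 _ hx.1, hS.2.2.1 _ hx.2⟩
  map := fun hx => ⟨hS.2.2.2 _ hx.1, hS.2.2.2 _ hx.2⟩

end AuxCEP

/-- a Boolean frame `(α, f)` has the congruence extension property iff
every principal congruence of every 2-generated subalgebra extends to a congruence
of `(α, f)`. -/
theorem stmt_19 {α : Type u} [BooleanAlgebra α] (f : α → α) :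
    HasCEP f ↔
      ∀ x y : α, ∀ a ∈ Sg f {x, y}, ∀ b ∈ Sg f {x, y},
        ∃ Ψ : α → α → Prop, IsCongr f Ψ ∧
          ∀ u v, CgOn f (Sg f {x, y}) a b u v ↔
            (Ψ u v ∧ u ∈ Sg f {x, y} ∧ v ∈ Sg f {x, y}) := by
  constructor
  · -- CEP implies the extension of principal congruences of 2-generated subalgebras
    intro hCEP x y a ha b hb
    have hS : IsSubalg f (Sg f {x, y}) := isSubalg_sg f _
    have hCg : IsCongrOn f (Sg f {x, y}) (CgOn f (Sg f {x, y}) a b) :=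
      { dom := fun h => h _ (isCongrOn_full f hS) ⟨ha, hb⟩
        refl := fun z hz Θ hΘ _ => hΘ.refl z hz
        symm := fun h Θ hΘ hab => hΘ.symm (h Θ hΘ hab)
        trans := fun h1 h2 Θ hΘ hab => hΘ.trans (h1 Θ hΘ hab) (h2 Θ hΘ hab)
        inf := fun h1 h2 Θ hΘ hab => hΘ.inf (h1 Θ hΘ hab) (h2 Θ hΘ hab)
        compl := fun h Θ hΘ hab => hΘ.compl (h Θ hΘ hab)
        map := fun h Θ hΘ hab => hΘ.map (h Θ hΘ hab) }
    exact hCEP _ hS _ hCg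
  · -- the converse
    intro H B hB Θ hΘ
    refine ⟨fun u v => ∃ d, Θ d ⊥ ∧ CgA f d u v, ?_, ?_⟩
    · constructor
      · intro z; exact ⟨⊥, hΘ.refl ⊥ hB.1, fun Ψ hΨ _ => hΨ.refl z⟩
      · rintro u v ⟨d, hd, h⟩; exact ⟨d, hd, (isCongr_cgA f d).symm h⟩
      · rintro u v w ⟨d, hd, h1⟩ ⟨d', hd', h2⟩
        exact ⟨d ⊔ d', isCongrOn_sup_bot f hΘ hd hd',
          (isCongr_cgA f _).trans (cgA_mono f le_sup_left h1) (cgA_mono f le_sup_right h2)⟩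
      · rintro u v u' v' ⟨d, hd, h1⟩ ⟨d', hd', h2⟩
        exact ⟨d ⊔ d', isCongrOn_sup_bot f hΘ hd hd',
          (isCongr_cgA f _).inf (cgA_mono f le_sup_left h1) (cgA_mono f le_sup_right h2)⟩
      · rintro u v ⟨d, hd, h⟩; exact ⟨d, hd, (isCongr_cgA f d).compl h⟩
      · rintro u v ⟨d, hd, h⟩; exact ⟨d, hd, (isCongr_cgA f d).map h⟩
    · intro u v
      constructor
      · intro huv
        obtain ⟨hu, hv⟩ := hΘ.dom huv
        exact ⟨⟨(u ⊓ vᶜ) ⊔ (v ⊓ uᶜ), isCongrOn_symmdiff_bot f hB hΘ huv,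
          fun Ψ hΨ hd => isCongr_of_symmdiff_bot f hΨ hd⟩, hu, hv⟩
      · rintro ⟨⟨d, hd, hcg⟩, hu, hv⟩
        set e := (u ⊓ vᶜ) ⊔ (v ⊓ uᶜ) with he_def
        have hdB : d ∈ B := (hΘ.dom hd).1
        have heB : e ∈ B := isSubalg_mem_sd hB hu hv
        have hS : IsSubalg f (Sg f ({d, e} : Set α)) := isSubalg_sg f _
        have hdS : d ∈ Sg f ({d, e} : Set α) := subset_sg f _ (by simp)
        have heS : e ∈ Sg f ({d, e} : Set α) := subset_sg f _ (by simp)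
        have hSB : Sg f ({d, e} : Set α) ⊆ B :=
          sg_subset hB (Set.insert_subset_iff.mpr ⟨hdB, Set.singleton_subset_iff.mpr heB⟩)
        obtain ⟨Ψ₀, hΨ₀, hiff⟩ := H d e d hdS ⊥ hS.1
        have hΨ₀d : Ψ₀ d ⊥ := ((hiff d ⊥).mp (fun _ _ h => h)).1
        have hcge : CgA f d e ⊥ := isCongr_symmdiff_bot f (isCongr_cgA f d) hcg
        have hΨ₀e : Ψ₀ e ⊥ := hcge Ψ₀ hΨ₀ hΨ₀d
        have hCgOn : CgOn f (Sg f ({d, e} : Set α)) d ⊥ e ⊥ :=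
          (hiff e ⊥).mpr ⟨hΨ₀e, heS, hS.1⟩
        have hres := isCongrOn_restrict f hΘ hS hSB
        have hfin := hCgOn _ hres ⟨hd, hdS, hS.1⟩
        exact isCongrOn_of_symmdiff_bot f hΘ hu hv hfin.1
end
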